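/- In the group H = ℤ/4ℤ × ℤ/4ℤ × ℤ × ℤ × ℤ/4ℤ with multiplication (a,b,c,d,e)·(a',b',c',d',e') = (a+a'+2ec', b+b'+2ed', c+c', d+d', e+e'), the subset S = ℤ/4ℤ × ℤ/4ℤ × ℤ × 2ℤ × {0, 2} is a normal abelian subgroup on which the cocycle σ((a,b,c,d,e),(a',b',c',d',e')) = (−1)^{da'} is symmetric (indeed identically 1), and S is maximal among abelian subgroups of H on which σ is symmetric. -/

import Mathlib

/-!
Membership in `S` says: the `d`-component is even and `2 e = 0`. The second condition is exactly
what makes the correction terms `2 e c'`, `2 e d'` of the multiplication vanish, so `S` is abelian,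
and an even `d` kills the sign in `σ`. Conversely, an element `t` of a larger subgroup `T` would
violate one of the two conditions: if `2 e ≠ 0`, then `t` does not commute with `(0,0,1,0,0) ∈ S`,
and if `d` is odd, then `σ(t, x) = -1 ≠ 1 = σ(x, t)` for `x = (1,0,0,0,0) ∈ S`.
-/

abbrev HV : Type := ZMod 4 × ZMod 4 × ℤ × ℤ × ZMod 4

def hmul (a b : HV) : HV :=
  (a.1 + b.1 + 2 * a.2.2.2.2 * (b.2.2.1 : ZMod 4),
   a.2.1 + b.2.1 + 2 * a.2.2.2.2 * (b.2.2.2.1 : ZMod 4),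
   a.2.2.1 + b.2.2.1,
   a.2.2.2.1 + b.2.2.2.1,
   a.2.2.2.2 + b.2.2.2.2)

def he : HV := (0, 0, 0, 0, 0)

def hinv (a : HV) : HV :=
  (2 * a.2.2.2.2 * (a.2.2.1 : ZMod 4) - a.1,
   2 * a.2.2.2.2 * (a.2.2.2.1 : ZMod 4) - a.2.1,
   -a.2.2.1, -a.2.2.2.1, -a.2.2.2.2)

noncomputable def sigma (a b : HV) : ℂ :=
  (-1 : ℂ) ^ (a.2.2.2.1 * ((b.1.val : ℤ)))

def SH : Set HV :=
  {a | (∃ k : ℤ, a.2.2.2.1 = 2 * k) ∧ (a.2.2.2.2 = 0 ∨ a.2.2.2.2 = 2)}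

def IsSubgrp (T : Set HV) : Prop :=
  he ∈ T ∧ (∀ a ∈ T, ∀ b ∈ T, hmul a b ∈ T) ∧ (∀ a ∈ T, hinv a ∈ T)

lemma zmod4_two_mul_eq_zero_iff (e : ZMod 4) : 2 * e = 0 ↔ e = 0 ∨ e = 2 := by
  revert e
  decide

lemma mem_SH_iff (a : HV) : a ∈ SH ↔ 2 ∣ a.2.2.2.1 ∧ 2 * a.2.2.2.2 = 0 := by
  rw [zmod4_two_mul_eq_zero_iff]
  rfl

lemma isSubgrp_SH : IsSubgrp SH := by
  simp only [IsSubgrp, mem_SH_iff, he, hmul, hinv]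
  refine ⟨by simp, ?_, ?_⟩
  · rintro a ⟨hda, hea⟩ b ⟨hdb, heb⟩
    exact ⟨dvd_add hda hdb, by rw [mul_add, hea, heb, add_zero]⟩
  · rintro a ⟨hda, hea⟩
    exact ⟨dvd_neg.2 hda, by rw [mul_neg, hea, neg_zero]⟩

lemma hmul_hinv_hmul_snd_snd_snd (g s : HV) :
    (hmul (hinv g) (hmul s g)).2.2.2 = s.2.2.2 := by
  simp only [hmul, hinv]
  ext <;> ring

lemma conj_mem_SH (g s : HV) (hs : s ∈ SH) : hmul (hinv g) (hmul s g) ∈ SH := by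
  rw [mem_SH_iff, hmul_hinv_hmul_snd_snd_snd]
  exact (mem_SH_iff s).1 hs

lemma hmul_comm_of_two_mul_eq_zero {a b : HV} (ha : 2 * a.2.2.2.2 = 0) (hb : 2 * b.2.2.2.2 = 0) :
    hmul a b = hmul b a := by
  simp only [hmul, ha, hb, zero_mul, add_zero, Prod.mk.injEq]
  refine ⟨?_, ?_, ?_, ?_, ?_⟩ <;> ring

lemma sigma_eq_one_of_two_dvd {a : HV} (b : HV) (ha : 2 ∣ a.2.2.2.1) : sigma a b = 1 := by
  obtain ⟨k, hk⟩ := ha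
  rw [sigma, hk, mul_assoc, zpow_mul]
  norm_num

lemma hmul_comm_iff_two_mul_eq_zero (a : HV) :
    hmul a (0, 0, 1, 0, 0) = hmul (0, 0, 1, 0, 0) a ↔ 2 * a.2.2.2.2 = 0 := by
  simp [hmul, Prod.ext_iff, add_comm]

lemma sigma_comm_iff_two_dvd (a : HV) :
    sigma a (1, 0, 0, 0, 0) = sigma (1, 0, 0, 0, 0) a ↔ 2 ∣ a.2.2.2.1 := by
  have hval : (((1 : ZMod 4).val : ℤ)) = 1 := rfl
  simp only [sigma, hval, mul_one, zero_mul, zpow_zero]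
  rcases Int.even_or_odd a.2.2.2.1 with h | h
  · simp [h.neg_one_zpow, even_iff_two_dvd.1 h]
  · norm_num [h.neg_one_zpow, ← even_iff_two_dvd, Int.not_even_iff_odd.2 h]

lemma mem_SH_of_comm_of_sigma_comm {a : HV}
    (hcomm : hmul a (0, 0, 1, 0, 0) = hmul (0, 0, 1, 0, 0) a)
    (hsym : sigma a (1, 0, 0, 0, 0) = sigma (1, 0, 0, 0, 0) a) : a ∈ SH :=
  (mem_SH_iff a).2 ⟨(sigma_comm_iff_two_dvd a).1 hsym, (hmul_comm_iff_two_mul_eq_zero a).1 hcomm⟩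

/-- `S` is a normal abelian subgroup of `H` on which `σ` is identically `1` (hence
symmetric), and `S` is maximal among abelian subgroups of `H` on which `σ` is
symmetric. -/
theorem h_S_maximal :
    IsSubgrp SH ∧
    (∀ g : HV, ∀ s ∈ SH, hmul (hinv g) (hmul s g) ∈ SH) ∧
    (∀ s ∈ SH, ∀ t ∈ SH, hmul s t = hmul t s) ∧
    (∀ s ∈ SH, ∀ t ∈ SH, sigma s t = 1) ∧
    (∀ T : Set HV, IsSubgrp T → SH ⊆ T → SH ≠ T →
      ¬((∀ a ∈ T, ∀ b ∈ T, hmul a b = hmul b a) ∧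
        (∀ a ∈ T, ∀ b ∈ T, sigma a b = sigma b a))) := by
  refine ⟨isSubgrp_SH, conj_mem_SH, ?_, ?_, ?_⟩
  · intro s hs t ht
    exact hmul_comm_of_two_mul_eq_zero ((mem_SH_iff s).1 hs).2 ((mem_SH_iff t).1 ht).2
  · intro s hs t _
    exact sigma_eq_one_of_two_dvd t ((mem_SH_iff s).1 hs).1
  · rintro T - hST hne ⟨hcomm, hsym⟩
    have hc : ((0, 0, 1, 0, 0) : HV) ∈ T := hST ((mem_SH_iff _).2 ⟨dvd_zero 2, mul_zero 2⟩)
    have hx : ((1, 0, 0, 0, 0) : HV) ∈ T := hST ((mem_SH_iff _).2 ⟨dvd_zero 2, mul_zero 2⟩)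
    refine hne (hST.antisymm fun t ht => ?_)
    exact mem_SH_of_comm_of_sigma_comm (hcomm t ht _ hc) (hsym t ht _ hx)
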